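/- arXiv:1710.06878 — 3 statements merged into one kernel-verified Lean document; each statement's English description precedes it below -/
import Mathlib

section
/- Let Y and Z be topological spaces and suppose Y is regular and locally compact. Then the topologies t_co^Z, t_1^Z and t_{1,s}^Z on C(Y,Z) are admissible, i.e. for each of these topologies the evaluation map e(f,y) = f(y) from the function space times Y to Z is continuous. -/
open Set TopologicalSpace

/-- The family O_Z(Y) of preimages of open sets under continuous maps. -/
def OZ (Y Z : Type*) [TopologicalSpace Y] [TopologicalSpace Z] : Set (Set Y) :=
  {s | ∃ (f : ContinuousMap Y Z) (U : Set Z), IsOpen U ∧ s = f ⁻¹' U}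

/-- The Z-topology τ_Y^Z on Y, generated by the subbasis O_Z(Y). -/
def zTop (Y Z : Type*) [TopologicalSpace Y] [TopologicalSpace Z] : TopologicalSpace Y :=
  TopologicalSpace.generateFrom (OZ Y Z)

/-- K is Z-compact if K is compact in (Y, τ_Y^Z). -/
def IsZCompact (Y Z : Type*) [TopologicalSpace Y] [TopologicalSpace Z] (K : Set Y) : Prop :=
  @IsCompact Y (zTop Y Z) K

/-- The Z-compact open topology on C(Y,Z). -/
def tcoZ (Y Z : Type*) [TopologicalSpace Y] [TopologicalSpace Z] :
    TopologicalSpace (ContinuousMap Y Z) :=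
  TopologicalSpace.generateFrom
    {S | ∃ (K : Set Y) (U : Set Z), IsZCompact Y Z K ∧ IsOpen U ∧
      S = {f : ContinuousMap Y Z | f '' K ⊆ U}}

/-- The compact open topology on C(Y,Z). -/
def tco (Y Z : Type*) [TopologicalSpace Y] [TopologicalSpace Z] :
    TopologicalSpace (ContinuousMap Y Z) :=
  TopologicalSpace.generateFrom
    {S | ∃ (K : Set Y) (U : Set Z), IsCompact K ∧ IsOpen U ∧
      S = {f : ContinuousMap Y Z | f '' K ⊆ U}}

/-- Membership in the Z-Scott family τ_1^Z on O(Y). -/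
def Tau1 (Y Z : Type*) [TopologicalSpace Y] [TopologicalSpace Z] (H : Set (Set Y)) : Prop :=
  (∀ s ∈ H, IsOpen s) ∧
  (∀ s ∈ H, s ∈ OZ Y Z → ∀ V : Set Y, IsOpen V → s ⊆ V → V ∈ H) ∧
  (∀ C ⊆ OZ Y Z, ⋃₀ C ∈ H → ∃ F ⊆ C, F.Finite ∧ ⋃₀ F ∈ H)

/-- Membership in the strong Z-Scott family τ_{1,s}^Z on O(Y). -/
def Tau1s (Y Z : Type*) [TopologicalSpace Y] [TopologicalSpace Z] (H : Set (Set Y)) : Prop :=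
  (∀ s ∈ H, IsOpen s) ∧
  (∀ s ∈ H, s ∈ OZ Y Z → ∀ V : Set Y, IsOpen V → s ⊆ V → V ∈ H) ∧
  (∀ C ⊆ OZ Y Z, ⋃₀ C = Set.univ → ∃ F ⊆ C, F.Finite ∧ ⋃₀ F ∈ H)

/-- Scott open families of open sets of Y. -/
def ScottOpen (Y : Type*) [TopologicalSpace Y] (H : Set (Set Y)) : Prop :=
  (∀ s ∈ H, IsOpen s) ∧
  (∀ s ∈ H, ∀ V : Set Y, IsOpen V → s ⊆ V → V ∈ H) ∧
  (∀ C : Set (Set Y), (∀ c ∈ C, IsOpen c) → ⋃₀ C ∈ H → ∃ F ⊆ C, F.Finite ∧ ⋃₀ F ∈ H)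

/-- Strong Scott open families of open sets of Y. -/
def StrongScottOpen (Y : Type*) [TopologicalSpace Y] (H : Set (Set Y)) : Prop :=
  (∀ s ∈ H, IsOpen s) ∧
  (∀ s ∈ H, ∀ V : Set Y, IsOpen V → s ⊆ V → V ∈ H) ∧
  (∀ C : Set (Set Y), (∀ c ∈ C, IsOpen c) → ⋃₀ C = Set.univ →
    ∃ F ⊆ C, F.Finite ∧ ⋃₀ F ∈ H)

/-- The topology t_1^Z on C(Y,Z). -/
def t1Z (Y Z : Type*) [TopologicalSpace Y] [TopologicalSpace Z] :
    TopologicalSpace (ContinuousMap Y Z) :=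
  TopologicalSpace.generateFrom
    {S | ∃ (H : Set (Set Y)) (U : Set Z), Tau1 Y Z H ∧ IsOpen U ∧
      S = {f : ContinuousMap Y Z | f ⁻¹' U ∈ H}}

/-- The topology t_{1,s}^Z on C(Y,Z). -/
def t1sZ (Y Z : Type*) [TopologicalSpace Y] [TopologicalSpace Z] :
    TopologicalSpace (ContinuousMap Y Z) :=
  TopologicalSpace.generateFrom
    {S | ∃ (H : Set (Set Y)) (U : Set Z), Tau1s Y Z H ∧ IsOpen U ∧
      S = {f : ContinuousMap Y Z | f ⁻¹' U ∈ H}}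

/-- The Isbell topology on C(Y,Z). -/
def tIs (Y Z : Type*) [TopologicalSpace Y] [TopologicalSpace Z] :
    TopologicalSpace (ContinuousMap Y Z) :=
  TopologicalSpace.generateFrom
    {S | ∃ (H : Set (Set Y)) (U : Set Z), ScottOpen Y H ∧ IsOpen U ∧
      S = {f : ContinuousMap Y Z | f ⁻¹' U ∈ H}}

/-- The strong Isbell topology on C(Y,Z). -/
def tsIs (Y Z : Type*) [TopologicalSpace Y] [TopologicalSpace Z] :
    TopologicalSpace (ContinuousMap Y Z) :=
  TopologicalSpace.generateFrom
    {S | ∃ (H : Set (Set Y)) (U : Set Z), StrongScottOpen Y H ∧ IsOpen U ∧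
      S = {f : ContinuousMap Y Z | f ⁻¹' U ∈ H}}

/-- A topology t on C(Y,Z) is admissible if the evaluation map is continuous. -/
def Admissible (Y Z : Type*) [TopologicalSpace Y] [TopologicalSpace Z]
    (t : TopologicalSpace (ContinuousMap Y Z)) : Prop :=
  @Continuous (ContinuousMap Y Z × Y) Z (@instTopologicalSpaceProd _ _ t _) _
    fun p => p.1 p.2

/-- B is bounded in (X, t): every t-open cover of X has a finite subfamily covering B. -/
def BoundedIn {X : Type*} (t : TopologicalSpace X) (B : Set X) : Prop :=
  ∀ C : Set (Set X), (∀ c ∈ C, @IsOpen X t c) → ⋃₀ C = Set.univ →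
    ∃ F ⊆ C, F.Finite ∧ B ⊆ ⋃₀ F


/-- Y is corecompact: each point has, inside each open neighborhood U, a smaller open
neighborhood that is bounded in the subspace U of Y. -/
def Corecompact (Y : Type*) [inst : TopologicalSpace Y] : Prop :=
  ∀ y : Y, ∀ U : Set Y, IsOpen U → y ∈ U →
    ∃ V : Set Y, IsOpen V ∧ y ∈ V ∧ V ⊆ U ∧
      BoundedIn (TopologicalSpace.induced (Subtype.val : U → Y) inst)
        ((Subtype.val : U → Y) ⁻¹' V)

/-- Y is locally bounded. -/
def LocallyBounded (Y : Type*) [inst : TopologicalSpace Y] : Prop :=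
  ∀ y : Y, ∀ U : Set Y, IsOpen U → y ∈ U →
    ∃ V : Set Y, IsOpen V ∧ y ∈ V ∧ V ⊆ U ∧ BoundedIn inst V

/-- Y is locally Z-bounded. -/
def LocallyZBounded (Y Z : Type*) [TopologicalSpace Y] [TopologicalSpace Z] : Prop :=
  ∀ y : Y, ∀ U : Set Y, IsOpen U → y ∈ U →
    ∃ s ∈ OZ Y Z, y ∈ s ∧ s ⊆ U ∧ BoundedIn (zTop Y Z) s

/-- A << U : A is bounded in the set U endowed with the subspace topology
inherited from (Y, τ_Y^Z). -/
def ZWayBelow (Y Z : Type*) [TopologicalSpace Y] [TopologicalSpace Z] (A U : Set Y) : Prop :=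
  BoundedIn (TopologicalSpace.induced (Subtype.val : U → Y) (zTop Y Z))
    ((Subtype.val : U → Y) ⁻¹' A)

/-- Y is Z-corecompact. -/
def ZCorecompact (Y Z : Type*) [TopologicalSpace Y] [TopologicalSpace Z] : Prop :=
  ∀ y : Y, ∀ U : Set Y, IsOpen U → y ∈ U →
    ∃ s ∈ OZ Y Z, y ∈ s ∧ s ⊆ U ∧ ZWayBelow Y Z s U

/-- The topology on O(Y) generated by the sets <K> = { U open : K ⊆ U }, K compact. -/
def kTop (Y : Type*) [TopologicalSpace Y] : TopologicalSpace (TopologicalSpace.Opens Y) :=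
  TopologicalSpace.generateFrom
    {S | ∃ K : Set Y, IsCompact K ∧ S = {U : TopologicalSpace.Opens Y | K ⊆ (U : Set Y)}}


lemma OZ_isOpen {Y Z : Type*} [TopologicalSpace Y] [TopologicalSpace Z]
    {s : Set Y} (hs : s ∈ OZ Y Z) : IsOpen s := by
  obtain ⟨f, U, hU, rfl⟩ := hs
  exact hU.preimage f.continuous

lemma eval_cont_aux {Y Z : Type*} [TopologicalSpace Y] [TopologicalSpace Z]
    [RegularSpace Y] [WeaklyLocallyCompactSpace Y]
    (t : TopologicalSpace (ContinuousMap Y Z))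
    (h : ∀ (K : Set Y), IsCompact K → ∀ U : Set Z, IsOpen U →
      @IsOpen _ t {f : ContinuousMap Y Z | f '' K ⊆ U}) :
    Admissible Y Z t := by
  rw [Admissible, @continuous_def]
  intro U hU
  rw [@isOpen_prod_iff _ _ t _]
  intro f y hfy
  have hW : IsOpen (f ⁻¹' U) := hU.preimage f.continuous
  obtain ⟨K, hK, hyK, hKW⟩ := exists_compact_subset hW hfy
  refine ⟨{g : ContinuousMap Y Z | g '' K ⊆ U}, interior K, h K hK U hU, isOpen_interior,
    ?_, hyK, ?_⟩
  · intro z hz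
    obtain ⟨x, hx, rfl⟩ := hz
    exact hKW hx
  · rintro ⟨g, y'⟩ ⟨hg, hy'⟩
    exact hg ⟨y', interior_subset hy', rfl⟩

lemma tau1_above {Y Z : Type*} [TopologicalSpace Y] [TopologicalSpace Z]
    {K : Set Y} (hK : IsCompact K) :
    Tau1 Y Z {V : Set Y | IsOpen V ∧ K ⊆ V} := by
  refine ⟨fun s hs => hs.1, fun s hs _ V hV hsV => ⟨hV, hs.2.trans hsV⟩, ?_⟩
  intro C hC hCU
  obtain ⟨F, hFC, hFfin, hcov⟩ := hK.elim_finite_subcover_image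
    (fun s hs => OZ_isOpen (hC hs)) (by simpa [Set.sUnion_eq_biUnion] using hCU.2)
  exact ⟨F, hFC, hFfin, isOpen_sUnion (fun s hs => OZ_isOpen (hC (hFC hs))),
    by simpa [Set.sUnion_eq_biUnion] using hcov⟩

lemma tau1s_above {Y Z : Type*} [TopologicalSpace Y] [TopologicalSpace Z]
    {K : Set Y} (hK : IsCompact K) :
    Tau1s Y Z {V : Set Y | IsOpen V ∧ K ⊆ V} := by
  refine ⟨fun s hs => hs.1, fun s hs _ V hV hsV => ⟨hV, hs.2.trans hsV⟩, ?_⟩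
  intro C hC hCU
  have hKC : K ⊆ ⋃ s ∈ C, s := by
    rw [← Set.sUnion_eq_biUnion, hCU]; exact Set.subset_univ K
  obtain ⟨F, hFC, hFfin, hcov⟩ := hK.elim_finite_subcover_image
    (fun s hs => OZ_isOpen (hC hs)) hKC
  exact ⟨F, hFC, hFfin, isOpen_sUnion (fun s hs => OZ_isOpen (hC (hFC hs))),
    by simpa [Set.sUnion_eq_biUnion] using hcov⟩

lemma setEq {Y Z : Type*} [TopologicalSpace Y] [TopologicalSpace Z]
    {K : Set Y} {U : Set Z} (hU : IsOpen U) :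
    {f : ContinuousMap Y Z | f '' K ⊆ U}
      = {f : ContinuousMap Y Z | f ⁻¹' U ∈ {V : Set Y | IsOpen V ∧ K ⊆ V}} := by
  ext f
  simp only [Set.mem_setOf_eq, Set.image_subset_iff]
  exact ⟨fun h => ⟨hU.preimage f.continuous, h⟩, fun h => h.2⟩

theorem stmt12 (Y Z : Type*) [TopologicalSpace Y] [TopologicalSpace Z]
    [RegularSpace Y] [WeaklyLocallyCompactSpace Y] :
    Admissible Y Z (tcoZ Y Z) ∧ Admissible Y Z (t1Z Y Z) ∧ Admissible Y Z (t1sZ Y Z) := by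
  have hZcomp : ∀ K : Set Y, IsCompact K → IsZCompact Y Z K := by
    intro K hK
    have hle : (‹TopologicalSpace Y› : TopologicalSpace Y) ≤ zTop Y Z :=
      le_generateFrom (fun s hs => OZ_isOpen hs)
    have hc : @Continuous Y Y _ (zTop Y Z) id := continuous_id_iff_le.mpr hle
    have := @IsCompact.image Y Y _ (zTop Y Z) K id hK hc
    simpa [IsZCompact] using this
  refine ⟨?_, ?_, ?_⟩
  · refine eval_cont_aux _ (fun K hK U hU => ?_)
    exact TopologicalSpace.isOpen_generateFrom_of_mem ⟨K, U, hZcomp K hK, hU, rfl⟩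
  · refine eval_cont_aux _ (fun K hK U hU => ?_)
    rw [setEq hU]
    exact TopologicalSpace.isOpen_generateFrom_of_mem ⟨_, U, tau1_above hK, hU, rfl⟩
  · refine eval_cont_aux _ (fun K hK U hU => ?_)
    rw [setEq hU]
    exact TopologicalSpace.isOpen_generateFrom_of_mem ⟨_, U, tau1s_above hK, hU, rfl⟩
end

section
/- Let Z be a topological space and let Y be a regular locally Z-compact space, meaning: for every y ∈ Y and every set f⁻¹(W) ∈ O_Z(Y) containing y there exists g⁻¹(V) ∈ O_Z(Y) such that the closure Cl(g⁻¹(V)) of g⁻¹(V) in the space (Y, τ_Y^Z) is compact in (Y, τ_Y^Z) and y ∈ g⁻¹(V) ⊆ Cl(g⁻¹(V)) ⊆ f⁻¹(W). Then the Z-compact open topology t_co^Z on C(Y,Z) is admissible, i.e. the evaluation map e : C_{t_co^Z}(Y,Z) × Y → Z, e(f,y) = f(y), is continuous. -/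
open Set TopologicalSpace

/-! If `g ∈ O_Z(Y)` contains `y` and its τ_Y^Z-closure `K` is Z-compact and mapped by `f` into
`W`, then `(K, W) × g` is a neighbourhood of `(f, y)` on which evaluation lands in `W`; it is
open in `C_{t_co^Z}(Y,Z) × Y` because members of `O_Z(Y)` are open in `Y`. -/

section ZCompactOpen

variable {Y Z : Type*} [TopologicalSpace Y] [TopologicalSpace Z]

theorem isOpen_of_mem_OZ {s : Set Y} (hs : s ∈ OZ Y Z) : IsOpen s := by
  obtain ⟨f, U, hU, rfl⟩ := hs
  exact hU.preimage f.continuous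

theorem isOpen_tcoZ_setOf_image_subset {K : Set Y} {U : Set Z} (hK : IsZCompact Y Z K)
    (hU : IsOpen U) : @IsOpen _ (tcoZ Y Z) {f : ContinuousMap Y Z | f '' K ⊆ U} :=
  TopologicalSpace.GenerateOpen.basic _ ⟨K, U, hK, hU, rfl⟩

theorem admissible_tcoZ_of_exists_isZCompact_nhds
    (h : ∀ (f : ContinuousMap Y Z) (y : Y) (W : Set Z), IsOpen W → f y ∈ W →
      ∃ K, IsZCompact Y Z K ∧ K ∈ nhds y ∧ f '' K ⊆ W) :
    Admissible Y Z (tcoZ Y Z) := by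
  rw [Admissible, continuous_def]
  intro W hW
  rw [@isOpen_prod_iff _ _ (tcoZ Y Z) _]
  intro f y hfy
  obtain ⟨K, hK, hKy, hfK⟩ := h f y W hW hfy
  obtain ⟨V, hVK, hV, hyV⟩ := mem_nhds_iff.mp hKy
  refine ⟨{f' | f' '' K ⊆ W}, V, isOpen_tcoZ_setOf_image_subset hK hW, hV, hfK, hyV, ?_⟩
  rintro ⟨f', y'⟩ ⟨hf', hy'⟩
  exact hf' (mem_image_of_mem f' (hVK hy'))

end ZCompactOpen

theorem stmt15 (Y Z : Type*) [TopologicalSpace Y] [TopologicalSpace Z]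
    (hY : ∀ y : Y, ∀ s ∈ OZ Y Z, y ∈ s →
      ∃ g ∈ OZ Y Z, y ∈ g ∧
        @IsCompact Y (zTop Y Z) (@closure Y (zTop Y Z) g) ∧
        @closure Y (zTop Y Z) g ⊆ s) :
    Admissible Y Z (tcoZ Y Z) := by
  refine admissible_tcoZ_of_exists_isZCompact_nhds fun f y W hW hfy => ?_
  obtain ⟨g, hg, hyg, hcl, hclW⟩ := hY y (f ⁻¹' W) ⟨f, W, hW, rfl⟩ hfy
  have hg_sub_cl : g ⊆ @closure Y (zTop Y Z) g := @subset_closure Y (zTop Y Z) g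
  refine ⟨_, hcl, Filter.mem_of_superset ((isOpen_of_mem_OZ hg).mem_nhds hyg) hg_sub_cl, ?_⟩
  exact image_subset_iff.mpr hclW
end

section
/- Let Z be a topological space and let Y be a Z-corecompact space. Then the topology t_1^Z on C(Y,Z) is admissible, i.e. the evaluation map e : C_{t_1^Z}(Y,Z) × Y → Z, e(f,y) = f(y), is continuous. -/
open Set TopologicalSpace

/-- Relative boundedness reformulated on Y: every τ^Z-open cover of O has a finite
subfamily covering A ∩ O. -/
def RB (Y Z : Type*) [TopologicalSpace Y] [TopologicalSpace Z] (A O : Set Y) : Prop :=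
  ∀ C : Set (Set Y), (∀ c ∈ C, @IsOpen Y (zTop Y Z) c) → O ⊆ ⋃₀ C →
    ∃ F ⊆ C, F.Finite ∧ A ∩ O ⊆ ⋃₀ F

lemma OZ_zopen {Y Z : Type*} [TopologicalSpace Y] [TopologicalSpace Z] {s : Set Y}
    (h : s ∈ OZ Y Z) : @IsOpen Y (zTop Y Z) s :=
  TopologicalSpace.GenerateOpen.basic s h

lemma OZ_open {Y Z : Type*} [TopologicalSpace Y] [TopologicalSpace Z] {s : Set Y}
    (h : s ∈ OZ Y Z) : IsOpen s := by
  obtain ⟨f, U, hU, rfl⟩ := h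
  exact hU.preimage f.continuous

lemma zwb_to_RB {Y Z : Type*} [TopologicalSpace Y] [TopologicalSpace Z] {A O : Set Y}
    (h : ZWayBelow Y Z A O) : RB Y Z A O := by
  intro C hC hcov
  obtain ⟨F', hF'sub, hF'fin, hF'cov⟩ :=
    h ((fun T => ((Subtype.val : O → Y) ⁻¹' T)) '' C)
      (by
        rintro c ⟨T, hTC, rfl⟩
        exact ⟨T, hC T hTC, rfl⟩)
      (by
        ext x
        simp only [Set.mem_univ, iff_true]
        obtain ⟨T, hTC, hxT⟩ := hcov x.2
        exact ⟨_, ⟨T, hTC, rfl⟩, hxT⟩)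
  have hchoose : ∀ e ∈ F', ∃ T, T ∈ C ∧ ((Subtype.val : O → Y) ⁻¹' T) = e := by
    intro e he
    obtain ⟨T, hTC, hTe⟩ := hF'sub he
    exact ⟨T, hTC, hTe⟩
  choose! T hTC hTe using hchoose
  refine ⟨(fun e => T e) '' F', ?_, hF'fin.image _, ?_⟩
  · rintro c ⟨e, he, rfl⟩
    exact hTC e he
  · rintro a ⟨haA, haO⟩
    have : (⟨a, haO⟩ : O) ∈ ⋃₀ F' := hF'cov haA
    obtain ⟨e, heF', hae⟩ := this
    refine ⟨T e, ⟨e, heF', rfl⟩, ?_⟩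
    have := hTe e heF'
    rw [← this] at hae
    exact hae

lemma RB_mono {Y Z : Type*} [TopologicalSpace Y] [TopologicalSpace Z] {A A' O : Set Y}
    (hA : A' ⊆ A) (h : RB Y Z A O) : RB Y Z A' O := by
  intro C hC hcov
  obtain ⟨F, hF, hfin, hsub⟩ := h C hC hcov
  exact ⟨F, hF, hfin, fun x hx => hsub ⟨hA hx.1, hx.2⟩⟩

lemma RB_up {Y Z : Type*} [TopologicalSpace Y] [TopologicalSpace Z] {A O O' : Set Y}
    (hAO : A ⊆ O) (hOO' : O ⊆ O') (h : RB Y Z A O) : RB Y Z A O' := by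
  intro C hC hcov
  obtain ⟨F, hF, hfin, hsub⟩ := h C hC (hOO'.trans hcov)
  exact ⟨F, hF, hfin, fun x hx => hsub ⟨hx.1, hAO hx.1⟩⟩

theorem stmt18 (Y Z : Type*) [TopologicalSpace Y] [TopologicalSpace Z]
    (hY : ZCorecompact Y Z) :
    Admissible Y Z (t1Z Y Z) := by
  letI : TopologicalSpace (ContinuousMap Y Z) := t1Z Y Z
  show Continuous fun p : ContinuousMap Y Z × Y => p.1 p.2
  rw [continuous_def]
  intro W hW
  rw [isOpen_iff_forall_mem_open]
  rintro ⟨f, y⟩ hfy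
  have hfy' : f y ∈ W := hfy
  obtain ⟨s, hsOZ, hys, hsU, hwb⟩ :=
    hY y (f ⁻¹' W) (hW.preimage f.continuous) hfy'
  have hRBsU : RB Y Z s (f ⁻¹' W) := zwb_to_RB hwb
  set H : Set (Set Y) := {O | IsOpen O ∧ s ⊆ O ∧ RB Y Z s O} with hH
  have hTau : Tau1 Y Z H := by
    refine ⟨fun O hO => hO.1, ?_, ?_⟩
    · intro O hO _ V hV hOV
      exact ⟨hV, hO.2.1.trans hOV, RB_up hO.2.1 hOV hO.2.2⟩
    · intro C hCOZ hUC
      obtain ⟨hopen, hsC, hRB⟩ := hUC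
      rcases isEmpty_or_nonempty Y with hY0 | hY1
      · refine ⟨∅, Set.empty_subset _, Set.finite_empty, ?_⟩
        rw [Set.sUnion_empty]
        exact ⟨isOpen_empty, fun v _ => (hY0.false v).elim,
          fun C₂ _ _ => ⟨∅, Set.empty_subset _, Set.finite_empty, by simp⟩⟩
      have key : ∀ x ∈ ⋃₀ C, ∃ t, ∃ c, c ∈ C ∧ t ∈ OZ Y Z ∧ x ∈ t ∧ t ⊆ c ∧ RB Y Z t c := by
        intro x hx
        obtain ⟨c, hcC, hxc⟩ := hx
        obtain ⟨t, htOZ, hxt, htc, hwb'⟩ := hY x c (OZ_open (hCOZ hcC)) hxc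
        exact ⟨t, c, hcC, htOZ, hxt, htc, zwb_to_RB hwb'⟩
      choose! t c hcC htOZ hxt htc hRBtc using key
      obtain ⟨F', hF'sub, hF'fin, hF'cov⟩ :=
        hRB {u | ∃ x ∈ ⋃₀ C, u = t x}
          (by rintro u ⟨x, hx, rfl⟩; exact OZ_zopen (htOZ x hx))
          (by intro x hx; exact ⟨t x, ⟨x, hx, rfl⟩, hxt x hx⟩)
      have hchoose : ∀ e ∈ F', ∃ x, x ∈ ⋃₀ C ∧ e = t x := fun e he => hF'sub he
      choose! xe hxeC hxeE using hchoose
      refine ⟨(fun e => c (xe e)) '' F', ?_, hF'fin.image _, ?_⟩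
      · rintro u ⟨e, he, rfl⟩
        exact hcC (xe e) (hxeC e he)
      · have hsF : s ⊆ ⋃₀ ((fun e => c (xe e)) '' F') := by
          intro v hv
          obtain ⟨e, heF', hve⟩ := hF'cov ⟨hv, hsC hv⟩
          refine ⟨c (xe e), ⟨e, heF', rfl⟩, ?_⟩
          have hvt : v ∈ t (xe e) := by rw [← hxeE e heF']; exact hve
          exact htc (xe e) (hxeC e heF') hvt
        refine ⟨?_, hsF, ?_⟩
        · exact isOpen_sUnion (by
            rintro u ⟨e, he, rfl⟩
            exact OZ_open (hCOZ (hcC (xe e) (hxeC e he))))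
        · intro C₂ hC₂ hcov₂
          have hsubF : ∀ e ∈ F', c (xe e) ⊆ ⋃₀ ((fun e => c (xe e)) '' F') := by
            intro e he v hv
            exact ⟨c (xe e), ⟨e, he, rfl⟩, hv⟩
          have hGe : ∀ e ∈ F', ∃ G ⊆ C₂, G.Finite ∧
              t (xe e) ∩ ⋃₀ ((fun e => c (xe e)) '' F') ⊆ ⋃₀ G := by
            intro e he
            exact RB_up (htc (xe e) (hxeC e he)) (hsubF e he)
              (hRBtc (xe e) (hxeC e he)) C₂ hC₂ hcov₂
          choose! G hGsub hGfin hGcov using hGe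
          refine ⟨⋃ e ∈ F', G e, ?_, hF'fin.biUnion (fun e he => hGfin e he), ?_⟩
          · intro u hu
            simp only [Set.mem_iUnion] at hu
            obtain ⟨e, he, hu⟩ := hu
            exact hGsub e he hu
          · rintro v ⟨hvs, hvF⟩
            obtain ⟨e, heF', hve⟩ := hF'cov ⟨hvs, hsC hvs⟩
            have hvt : v ∈ t (xe e) := by rw [← hxeE e heF']; exact hve
            obtain ⟨g, hgG, hvg⟩ := hGcov e heF' ⟨hvt, hvF⟩
            exact ⟨g, Set.mem_biUnion heF' hgG, hvg⟩
  refine ⟨{g : ContinuousMap Y Z | g ⁻¹' W ∈ H} ×ˢ s, ?_, ?_, ?_⟩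
  · rintro ⟨g, y'⟩ ⟨hg, hy'⟩
    exact hg.2.1 hy'
  · exact IsOpen.prod
      (TopologicalSpace.GenerateOpen.basic _ ⟨H, W, hTau, hW, rfl⟩)
      (OZ_open hsOZ)
  · exact ⟨⟨hW.preimage f.continuous, hsU, hRBsU⟩, hys⟩
end
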